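/- Fix t > 0, ξ > 0, y₀ > 0 and p > 1, set η := 1/(2(p-1)), and define χ(τ,p) := τ^{2p}·exp(-y₀^{2(1-p)}/(2ξ²t(1-p)²)) / ((p-1)ξ²t·Γ(1+η)·(2(1-p)²ξ²t)^η). Then for all y > 0 and τ > 0: (i) ζ_p(y/τ) ≥ (χ(τ,p)/y^{2p})·(1 - (1/(2ξ²t(1-p)²))·(τ/y)^{2p-2}); and (ii) ζ_p(y/τ) ≤ (χ(τ,p)/y^{2p})·(1 + exp(y₀^{2-2p}/(2(p-1)²tξ²))·[ (1/(2ξ²t(1-p)²))·(τ/y)^{2p-2} + (1/(ξ²t(1-p)²))·(τ/(y·y₀))^{p-1} ]). -/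

import Mathlib

/-- The modified Bessel function of the first kind of order `ν`. -/
noncomputable def besselI (ν x : ℝ) : ℝ :=
  ∑' m : ℕ, (x / 2) ^ (2 * (m : ℝ) + ν) / ((m.factorial : ℝ) * Real.Gamma ((m : ℝ) + ν + 1))

/-! With `z = y / τ` the density factors as `ζ_p(z) = (χ / y^{2p}) e^{-u} Γ(1+η) (x/2)^{-η} I_η(x)`,
where `u = z^{2(1-p)} / (2ξ²t(1-p)²)` and the Bessel argument satisfies `(x/2)² = u K` with
`K = y₀^{2-2p} / (2(p-1)²tξ²)`. Since `Γ(m+η+1) ≥ m! Γ(η+1)`, the normalised Bessel factor is a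
power series in `(x/2)²` with constant term `1` and `m`-th coefficient at most `1/(m!)²`; bounding
`(uK)^m/(m!)² ≤ u · u^{m-1}/(m-1)! · e^K` puts it between `1` and `1 + u e^{u+K}`. The two bounds
then follow from `1 - u ≤ e^{-u}` and `e^{-u} (1 + u e^{u+K}) ≤ 1 + e^K u`. -/

open Real Nat

theorem Real.Gamma_add_one_mul_factorial_le {s : ℝ} (hs : 0 ≤ s) (m : ℕ) :
    Gamma (s + 1) * m ! ≤ Gamma (m + s + 1) := by
  induction m with
  | zero => simp
  | succ n ih =>
    have hpos : 0 < (n : ℝ) + s + 1 := by positivity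
    rw [show ((n + 1 : ℕ) : ℝ) + s + 1 = (n + s + 1) + 1 by push_cast; ring,
      Gamma_add_one hpos.ne', factorial_succ, cast_mul,
      show Gamma (s + 1) * ((n + 1 : ℕ) * n ! : ℝ) = (n + 1) * (Gamma (s + 1) * n !) by
        push_cast; ring]
    exact mul_le_mul (by linarith) ih (by positivity) hpos.le

theorem summable_pow_div_factorial_sq (c : ℝ) : Summable fun m : ℕ => c ^ m / (m ! : ℝ) ^ 2 := by
  refine .of_norm_bounded (summable_pow_div_factorial |c|) fun m => ?_
  rw [norm_div, norm_pow, norm_pow, Real.norm_eq_abs, Real.norm_natCast]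
  have h1 : (1 : ℝ) ≤ m ! := by exact_mod_cast m.factorial_pos
  gcongr
  nlinarith

theorem tsum_mul_pow_div_factorial_sq_le {a b : ℝ} (ha : 0 ≤ a) (hb : 0 ≤ b) :
    ∑' m : ℕ, (a * b) ^ m / (m ! : ℝ) ^ 2 ≤ 1 + a * exp (a + b) := by
  have hsum := summable_pow_div_factorial_sq (a * b)
  have hterm (m : ℕ) : (a * b) ^ (m + 1) / ((m + 1)! : ℝ) ^ 2 ≤ a * exp b * (a ^ m / m !) := by
    calc (a * b) ^ (m + 1) / ((m + 1)! : ℝ) ^ 2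
        = a * (a ^ m / (m + 1)!) * (b ^ (m + 1) / (m + 1)!) := by ring
      _ ≤ a * (a ^ m / m !) * exp b := by
          gcongr
          · exact m.le_succ
          · exact pow_div_factorial_le_exp _ hb _
      _ = a * exp b * (a ^ m / m !) := by ring
  have hexp : ∑' m : ℕ, a ^ m / (m ! : ℝ) = exp a := by
    rw [exp_eq_exp_ℝ, NormedSpace.exp_eq_tsum_div]
  calc ∑' m : ℕ, (a * b) ^ m / (m ! : ℝ) ^ 2
      = 1 + ∑' m : ℕ, (a * b) ^ (m + 1) / ((m + 1)! : ℝ) ^ 2 := by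
        rw [hsum.tsum_eq_zero_add]; simp
    _ ≤ 1 + ∑' m : ℕ, a * exp b * (a ^ m / m !) := by
        gcongr 1 + ?_
        exact Summable.tsum_le_tsum hterm ((summable_nat_add_iff 1).2 hsum)
          ((summable_pow_div_factorial a).mul_left _)
    _ = 1 + a * exp (a + b) := by rw [tsum_mul_left, hexp, exp_add]; ring

section besselI

variable {ν x : ℝ}

theorem besselI_term_le (hν : 0 ≤ ν) (hx : 0 < x) (m : ℕ) :
    (x / 2) ^ (2 * (m : ℝ) + ν) / (m ! * Gamma (m + ν + 1))
      ≤ (x / 2) ^ ν / Gamma (ν + 1) * (((x / 2) ^ 2) ^ m / (m ! : ℝ) ^ 2) := by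
  have hΓ := Gamma_add_one_mul_factorial_le hν m
  rw [rpow_add (by positivity), show 2 * (m : ℝ) = ((2 * m : ℕ) : ℝ) by push_cast; ring,
    rpow_natCast, pow_mul]
  calc ((x / 2) ^ 2) ^ m * (x / 2) ^ ν / (m ! * Gamma (m + ν + 1))
      ≤ ((x / 2) ^ 2) ^ m * (x / 2) ^ ν / (m ! * (Gamma (ν + 1) * m !)) := by gcongr
    _ = _ := by field_simp

theorem summable_besselI_term (hν : 0 ≤ ν) (hx : 0 < x) :
    Summable fun m : ℕ => (x / 2) ^ (2 * (m : ℝ) + ν) / (m ! * Gamma (m + ν + 1)) :=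
  ((summable_pow_div_factorial_sq _).mul_left _).of_nonneg_of_le (fun m => by positivity)
    (besselI_term_le hν hx)

theorem div_Gamma_le_besselI (hν : 0 ≤ ν) (hx : 0 < x) :
    (x / 2) ^ ν / Gamma (ν + 1) ≤ besselI ν x := by
  unfold besselI
  simpa using (summable_besselI_term hν hx).le_tsum 0 fun m _ => by positivity

theorem besselI_le_mul_tsum (hν : 0 ≤ ν) (hx : 0 < x) :
    besselI ν x ≤ (x / 2) ^ ν / Gamma (ν + 1) * ∑' m : ℕ, ((x / 2) ^ 2) ^ m / (m ! : ℝ) ^ 2 := by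
  rw [besselI, ← tsum_mul_left]
  exact (summable_besselI_term hν hx).tsum_le_tsum (besselI_term_le hν hx)
    ((summable_pow_div_factorial_sq _).mul_left _)

-- `= ₀F₁(; ν + 1; x² / 4)`
noncomputable def besselINormalized (ν x : ℝ) : ℝ :=
  Gamma (ν + 1) * besselI ν x / (x / 2) ^ ν

theorem one_le_besselINormalized (hν : 0 ≤ ν) (hx : 0 < x) : 1 ≤ besselINormalized ν x := by
  rw [besselINormalized, le_div_iff₀ (by positivity), one_mul, ← div_le_iff₀' (by positivity)]
  exact div_Gamma_le_besselI hν hx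

theorem besselINormalized_le (hν : 0 ≤ ν) (hx : 0 < x) {a b : ℝ} (ha : 0 ≤ a) (hb : 0 ≤ b)
    (hab : (x / 2) ^ 2 = a * b) : besselINormalized ν x ≤ 1 + a * exp (a + b) := by
  have hI := besselI_le_mul_tsum hν hx
  rw [hab] at hI
  rw [besselINormalized, div_le_iff₀ (by positivity)]
  calc Gamma (ν + 1) * besselI ν x
      ≤ Gamma (ν + 1) * ((x / 2) ^ ν / Gamma (ν + 1) * ∑' m : ℕ, (a * b) ^ m / (m ! : ℝ) ^ 2) := by
        gcongr
    _ = (∑' m : ℕ, (a * b) ^ m / (m ! : ℝ) ^ 2) * (x / 2) ^ ν := by field_simp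
    _ ≤ (1 + a * exp (a + b)) * (x / 2) ^ ν := by
        gcongr
        exact tsum_mul_pow_div_factorial_sq_le ha hb

end besselI

theorem one_sub_le_exp_neg_mul {u S : ℝ} (hS : 1 ≤ S) : 1 - u ≤ exp (-u) * S :=
  calc 1 - u ≤ exp (-u) := by linarith [add_one_le_exp (-u)]
    _ ≤ exp (-u) * S := le_mul_of_one_le_right (exp_pos _).le hS

theorem exp_neg_mul_le_one_add {u K S : ℝ} (hu : 0 ≤ u) (hS : S ≤ 1 + u * exp (u + K)) :
    exp (-u) * S ≤ 1 + exp K * u :=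
  calc exp (-u) * S ≤ exp (-u) * (1 + u * exp (u + K)) := by gcongr
    _ = exp (-u) + exp K * u := by rw [exp_add, exp_neg]; field_simp
    _ ≤ 1 + exp K * u := by gcongr; exact exp_le_one_iff.2 (neg_nonpos.2 hu)

noncomputable def cevBesselArg (t ξ y0 p z : ℝ) : ℝ :=
  (y0 * z) ^ (1 - p) / ((1 - p) ^ 2 * ξ ^ 2 * t)

noncomputable def cevDensity (t ξ y0 p z : ℝ) : ℝ :=
  sqrt y0 * z ^ ((1 : ℝ) / 2 - 2 * p) / ((p - 1) * ξ ^ 2 * t)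
    * exp (-(z ^ (2 * (1 - p)) + y0 ^ (2 * (1 - p))) / (2 * ξ ^ 2 * t * (1 - p) ^ 2))
    * besselI (1 / (2 * (p - 1))) (cevBesselArg t ξ y0 p z)

section cev

variable {t ξ y0 p z : ℝ}

theorem cevBesselArg_pos (ht : 0 < t) (hξ : 0 < ξ) (hy0 : 0 < y0) (hp : 1 < p) (hz : 0 < z) :
    0 < cevBesselArg t ξ y0 p z := by
  have : 0 < (1 - p) ^ 2 := by nlinarith
  unfold cevBesselArg
  positivity

theorem cevBesselArg_div_two_sq (ht : 0 < t) (hξ : 0 < ξ) (hy0 : 0 < y0) (hp : 1 < p)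
    (hz : 0 < z) :
    (cevBesselArg t ξ y0 p z / 2) ^ 2
      = 1 / (2 * ξ ^ 2 * t * (1 - p) ^ 2) * z ^ (2 * (1 - p))
        * (y0 ^ (2 - 2 * p) / (2 * (p - 1) ^ 2 * t * ξ ^ 2)) := by
  have hp' : p - 1 ≠ 0 := by linarith
  have hp'' : 1 - p ≠ 0 := by linarith
  have hsq : ((y0 * z) ^ (1 - p)) ^ 2 = y0 ^ (2 - 2 * p) * z ^ (2 * (1 - p)) := by
    rw [← rpow_natCast, ← rpow_mul (by positivity), mul_rpow hy0.le hz.le]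
    ring_nf
  rw [cevBesselArg, div_pow, div_pow, hsq]
  field_simp
  ring

theorem cevDensity_eq (ht : 0 < t) (hξ : 0 < ξ) (hy0 : 0 < y0) (hp : 1 < p) (hz : 0 < z) :
    cevDensity t ξ y0 p z = z ^ (-(2 * p))
      * (exp (-(y0 ^ (2 * (1 - p))) / (2 * ξ ^ 2 * t * (1 - p) ^ 2))
        / ((p - 1) * ξ ^ 2 * t * Gamma (1 + 1 / (2 * (p - 1)))
          * (2 * (1 - p) ^ 2 * ξ ^ 2 * t) ^ (1 / (2 * (p - 1)))))
      * (exp (-(1 / (2 * ξ ^ 2 * t * (1 - p) ^ 2) * z ^ (2 * (1 - p))))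
        * besselINormalized (1 / (2 * (p - 1))) (cevBesselArg t ξ y0 p z)) := by
  set η := 1 / (2 * (p - 1)) with hη
  set P := 2 * (1 - p) ^ 2 * ξ ^ 2 * t with hP_def
  have hp' : p - 1 ≠ 0 := by linarith
  have hP : 0 < P := by
    have : 0 < (1 - p) ^ 2 := by nlinarith
    positivity
  have hx : 0 < cevBesselArg t ξ y0 p z := cevBesselArg_pos ht hξ hy0 hp hz
  -- `(1 - p) η = -1/2` is what makes the powers of `y0` cancel
  have hxη : (cevBesselArg t ξ y0 p z / 2) ^ η = (y0 * z) ^ (-(1 / 2) : ℝ) / P ^ η := by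
    rw [cevBesselArg, div_div, hP_def, div_rpow (by positivity) (by positivity),
      ← rpow_mul (by positivity), show (1 - p) * η = -(1 / 2) by rw [hη]; field_simp; ring]
    ring_nf
  have hpow :
      sqrt y0 * z ^ ((1 : ℝ) / 2 - 2 * p) * (y0 * z) ^ (-(1 / 2) : ℝ) = z ^ (-(2 * p)) := by
    rw [sqrt_eq_rpow, mul_rpow hy0.le hz.le, mul_mul_mul_comm, ← rpow_add hy0, ← rpow_add hz]
    norm_num
    ring_nf
  have hexp : exp (-(z ^ (2 * (1 - p)) + y0 ^ (2 * (1 - p))) / (2 * ξ ^ 2 * t * (1 - p) ^ 2))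
      = exp (-(y0 ^ (2 * (1 - p))) / (2 * ξ ^ 2 * t * (1 - p) ^ 2))
        * exp (-(1 / (2 * ξ ^ 2 * t * (1 - p) ^ 2) * z ^ (2 * (1 - p)))) := by
    rw [← exp_add]
    ring_nf
  have hΓ : 0 < Gamma (1 + η) := Gamma_pos_of_pos (by positivity)
  have hPη : 0 < P ^ η := by positivity
  have hy0z : 0 < (y0 * z) ^ (-(1 / 2) : ℝ) := by positivity
  rw [cevDensity, ← hη, besselINormalized, hxη, hexp, ← hpow, add_comm η 1]
  field_simp

end cev

theorem stmt_6 (t ξ y0 p : ℝ) (ht : 0 < t) (hξ : 0 < ξ) (hy0 : 0 < y0) (hp : 1 < p)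
    (y τ : ℝ) (hy : 0 < y) (hτ : 0 < τ) :
    let η : ℝ := 1 / (2 * (p - 1))
    -- the CEV density (case `p > 1`)
    let ζ : ℝ → ℝ := fun z =>
      Real.sqrt y0 * z ^ ((1 : ℝ) / 2 - 2 * p) / ((p - 1) * ξ ^ 2 * t)
        * Real.exp (-(z ^ (2 * (1 - p)) + y0 ^ (2 * (1 - p))) / (2 * ξ ^ 2 * t * (1 - p) ^ 2))
        * besselI η ((y0 * z) ^ (1 - p) / ((1 - p) ^ 2 * ξ ^ 2 * t))
    let χ : ℝ := τ ^ (2 * p) * Real.exp (-(y0 ^ (2 * (1 - p))) / (2 * ξ ^ 2 * t * (1 - p) ^ 2))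
        / ((p - 1) * ξ ^ 2 * t * Real.Gamma (1 + η) * (2 * (1 - p) ^ 2 * ξ ^ 2 * t) ^ η)
    (χ / y ^ (2 * p)) * (1 - (1 / (2 * ξ ^ 2 * t * (1 - p) ^ 2)) * (τ / y) ^ (2 * p - 2))
        ≤ ζ (y / τ)
    ∧ ζ (y / τ) ≤ (χ / y ^ (2 * p)) *
        (1 + Real.exp (y0 ^ (2 - 2 * p) / (2 * (p - 1) ^ 2 * t * ξ ^ 2)) *
          ((1 / (2 * ξ ^ 2 * t * (1 - p) ^ 2)) * (τ / y) ^ (2 * p - 2)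
            + (1 / (ξ ^ 2 * t * (1 - p) ^ 2)) * (τ / (y * y0)) ^ (p - 1))) := by
  intro η ζ χ
  have hz : 0 < y / τ := div_pos hy hτ
  have hη : 0 ≤ η := by have := sub_pos.2 hp; positivity
  have hx := cevBesselArg_pos ht hξ hy0 hp hz
  set u := 1 / (2 * ξ ^ 2 * t * (1 - p) ^ 2) * (y / τ) ^ (2 * (1 - p))
  have hu : 0 ≤ u := by positivity
  have hτy : (τ / y) ^ (2 * p - 2) = (y / τ) ^ (2 * (1 - p)) := by
    rw [← inv_div, inv_rpow hz.le, ← rpow_neg hz.le]; ring_nf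
  have hζ : ζ (y / τ)
      = χ / y ^ (2 * p) * (exp (-u) * besselINormalized η (cevBesselArg t ξ y0 p (y / τ))) := by
    change cevDensity t ξ y0 p (y / τ) = _
    rw [cevDensity_eq ht hξ hy0 hp hz, rpow_neg hz.le, div_rpow hy.le hτ.le, inv_div]
    simp only [χ, η, u]
    ring
  have hχ : 0 ≤ χ / y ^ (2 * p) := by
    have hD : 0 < (p - 1) * ξ ^ 2 * t := by have := sub_pos.2 hp; positivity
    simp only [χ]
    positivity
  have hlower := one_le_besselINormalized hη hx
  have hupper := besselINormalized_le hη hx hu (by positivity)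
    (cevBesselArg_div_two_sq ht hξ hy0 hp hz)
  rw [hζ, hτy]
  refine ⟨mul_le_mul_of_nonneg_left (one_sub_le_exp_neg_mul hlower) hχ,
    mul_le_mul_of_nonneg_left ((exp_neg_mul_le_one_add hu hupper).trans ?_) hχ⟩
  gcongr
  exact le_add_of_nonneg_right (by positivity)
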